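/- Let r ≥ 1 be an integer, u > 1 real, and x > 1 the solution of Σ_{j=1}^r x^j = u·r. If r ≥ log u, then x^r > e^{−1}·u·log u and x^r ≤ 1 + 2·u·log u. -/

import Mathlib

/-!
Multiplying the saddle-point equation by `1 - x⁻¹` gives `x ^ r = 1 + u * t` with
`t = r * (1 - x⁻¹) = r * (1 - exp (-log x))`. Since `x ^ r ≥ u`, we have `r * log x ≥ log u`, and
together with `r ≥ log u` the bound `1 - exp (-a) ≥ exp (-1) * min a 1` gives `t ≥ exp (-1) * log u`,
hence the lower bound. Conversely `t ≤ r * log x`, so `exp t ≤ x ^ r = 1 + u * t`; since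
`exp t` outgrows `1 + u * t` from `t = 2 * log u` on, this forces `t < 2 * log u`.
-/

open Finset Real

theorem geom_sum_Icc_mul_one_sub_inv {K : Type*} [Field K] {x : K} (hx : x ≠ 0) (r : ℕ) :
    (∑ j ∈ Icc 1 r, x ^ j) * (1 - x⁻¹) = x ^ r - 1 := by
  have h := geom_sum_Ico_mul x (Nat.le_add_left 1 r)
  rw [Ico_add_one_right_eq_Icc] at h
  field_simp
  rw [h, pow_succ]
  ring

theorem sum_Icc_pow_le_mul_pow {R : Type*} [Semiring R] [PartialOrder R] [IsOrderedRing R]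
    {x : R} (hx : 1 ≤ x) (r : ℕ) : ∑ j ∈ Icc 1 r, x ^ j ≤ r * x ^ r := by
  simpa [nsmul_eq_mul] using
    sum_le_card_nsmul (Icc 1 r) (x ^ ·) (x ^ r) fun j hj ↦ pow_le_pow_right₀ hx (mem_Icc.1 hj).2

theorem Real.exp_neg_one_mul_min_le_one_sub_exp_neg {a : ℝ} (ha : 0 ≤ a) :
    exp (-1) * min a 1 ≤ 1 - exp (-a) := by
  rcases le_total a 1 with ha1 | ha1
  · have h : a * exp (-a) ≤ 1 - exp (-a) := by
      have := mul_le_mul_of_nonneg_right (add_one_le_exp a) (exp_pos (-a)).le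
      rw [← exp_add, add_neg_cancel, exp_zero] at this
      linarith
    rw [min_eq_left ha1]
    calc exp (-1) * a ≤ a * exp (-a) := by
          rw [mul_comm]; gcongr
      _ ≤ 1 - exp (-a) := h
  · have h2 : 2 * exp (-1) < 1 := by
      rw [exp_neg, ← div_eq_mul_inv, div_lt_one (exp_pos 1)]
      exact exp_one_gt_two
    rw [min_eq_right ha1, mul_one]
    have : exp (-a) ≤ exp (-1) := exp_le_exp.2 (by linarith)
    linarith

theorem Real.two_mul_log_lt_sub_inv {u : ℝ} (hu : 1 < u) : 2 * log u < u - u⁻¹ := by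
  have h := self_lt_sinh_iff.2 (log_pos hu)
  rw [sinh_eq, exp_neg, exp_log (by linarith)] at h
  linarith

theorem Real.one_add_mul_lt_exp {u t : ℝ} (hu : 1 < u) (ht : 2 * log u ≤ t) :
    1 + u * t < exp t := by
  obtain ⟨d, hd, rfl⟩ : ∃ d, 0 ≤ d ∧ t = 2 * log u + d := ⟨t - 2 * log u, by linarith, by ring⟩
  have hexp : exp (2 * log u + d) = u ^ 2 * exp d := by
    rw [exp_add, two_mul, exp_add, exp_log (by linarith)]
    ring
  have hlog : 1 + 2 * u * log u < u ^ 2 := by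
    have := mul_lt_mul_of_pos_left (two_mul_log_lt_sub_inv hu) (by linarith : 0 < u)
    rw [mul_sub, mul_inv_cancel₀ (by linarith)] at this
    linarith
  have hgrow : u ^ 2 * (1 + d) ≤ u ^ 2 * exp d := by
    gcongr; linarith [add_one_le_exp d]
  have hd' : u * d ≤ u ^ 2 * d := by
    gcongr; nlinarith
  rw [hexp]
  linarith

theorem stmt_8_general (r : ℕ) (u x : ℝ) (hu : 1 < u) (hx : 1 < x)
    (hsaddle : ∑ j ∈ Finset.Icc 1 r, x ^ j = u * r)
    (hrlog : Real.log u ≤ r) :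
    Real.exp (-1) * u * Real.log u < x ^ r ∧ x ^ r ≤ 1 + 2 * u * Real.log u := by
  have hx0 : 0 < x := by linarith
  have hlogu : 0 < log u := log_pos hu
  set t := (r : ℝ) * (1 - exp (-log x)) with ht
  have hxr : x ^ r = 1 + u * t := by
    rw [ht, exp_neg, exp_log hx0]
    linear_combination -geom_sum_Icc_mul_one_sub_inv hx0.ne' r + (1 - x⁻¹) * hsaddle
  have hux : u ≤ x ^ r := le_of_mul_le_mul_right
    (by linarith [hsaddle ▸ sum_Icc_pow_le_mul_pow hx.le r]) (hlogu.trans_le hrlog)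
  have hlog_le : log u ≤ r * log x := by
    rw [← log_pow]; exact log_le_log (by linarith) hux
  constructor
  · have hlower : exp (-1) * log u ≤ t := by
      calc exp (-1) * log u ≤ exp (-1) * (r * min (log x) 1) := by
            rw [mul_min_of_nonneg _ _ (Nat.cast_nonneg r), mul_one]
            gcongr
            exact le_min hlog_le hrlog
        _ ≤ t := by
            rw [ht, mul_left_comm]
            gcongr
            exact exp_neg_one_mul_min_le_one_sub_exp_neg (log_nonneg hx.le)
    have := mul_le_mul_of_nonneg_left hlower (by linarith : 0 ≤ u)
    linarith
  · have hexp : exp t ≤ x ^ r := by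
      rw [← exp_log (pow_pos hx0 r), log_pow, exp_le_exp, ht, exp_neg, exp_log hx0]
      gcongr
      exact one_sub_inv_le_log_of_pos hx0
    have ht2 : t < 2 * log u := by
      by_contra! h
      linarith [one_add_mul_lt_exp hu h]
    have := mul_le_mul_of_nonneg_left ht2.le (by linarith : 0 ≤ u)
    linarith

theorem stmt_8 (r : ℕ) (hr : 1 ≤ r) (u x : ℝ) (hu : 1 < u) (hx : 1 < x)
    (hsaddle : ∑ j ∈ Finset.Icc 1 r, x ^ j = u * r)
    (hrlog : Real.log u ≤ r) :
    Real.exp (-1) * u * Real.log u < x ^ r ∧ x ^ r ≤ 1 + 2 * u * Real.log u :=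
  stmt_8_general r u x hu hx hsaddle hrlog
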